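/- The Mönkemeyer matrices M_0 and M_1 have identical columns in positions 1,…,n (that is, M_0 e_i = M_1 e_i for every i ≠ 0). Consequently, for every x ∈ M_0[Δ] ∩ M_1[Δ] one has M_0^{−1}x/‖M_0^{−1}x‖₁ = M_1^{−1}x/‖M_1^{−1}x‖₁, and the Gauss-type map G : Δ → Δ defined by G(x) = M_a^{−1}x/‖M_a^{−1}x‖₁ for x ∈ M_a[Δ] (a ∈ {0,1}) is well defined and continuous on Δ. -/

import Mathlib

open Matrix

abbrev MatZ (n : ℕ) : Type := Matrix (Fin (n + 1)) (Fin (n + 1)) ℤ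

def inSigma {n : ℕ} (A : MatZ n) : Prop :=
  IsUnit A.det ∧ ∀ i j, 0 ≤ A i j

def IsPermMat {n : ℕ} (A : MatZ n) : Prop :=
  ∃ σ : Equiv.Perm (Fin (n + 1)), ∀ i j, A i j = if i = σ j then 1 else 0

noncomputable def toR {n : ℕ} (A : MatZ n) : Matrix (Fin (n + 1)) (Fin (n + 1)) ℝ :=
  A.map ((↑) : ℤ → ℝ)

noncomputable def projAct {n : ℕ} (A : Matrix (Fin (n + 1)) (Fin (n + 1)) ℝ)
    (x : Fin (n + 1) → ℝ) : Fin (n + 1) → ℝ :=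
  (∑ i, (A *ᵥ x) i)⁻¹ • (A *ᵥ x)

noncomputable def simg {n : ℕ} (A : MatZ n) : Set (Fin (n + 1) → ℝ) :=
  projAct (toR A) '' stdSimplex ℝ (Fin (n + 1))

def wordProd {n : ℕ} (A0 A1 : MatZ n) (w : List Bool) : MatZ n :=
  (w.map (fun b => bif b then A1 else A0)).prod

def Contractive {n : ℕ} (A0 A1 : MatZ n) : Prop :=
  ∀ a : ℕ → Bool, ∃ p,
    (⋂ t : ℕ, simg (wordProd A0 A1 ((List.range t).map a))) = {p}

def Nmat (n : ℕ) : MatZ n :=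
  Matrix.of fun i j => if i = j then 1 else if j = 1 ∧ i = 0 then 1 else 0

def Fmat (n : ℕ) : MatZ n :=
  Matrix.of fun i j => if i = Equiv.swap (0 : Fin (n + 1)) 1 j then 1 else 0

def Rmat (n : ℕ) : MatZ n :=
  Matrix.of fun i j => if i = j + 1 then 1 else 0

def Lmat (n : ℕ) : MatZ n := Fmat n * Nmat n * Fmat n

def Mon0 (n : ℕ) : MatZ n := Nmat n * Fmat n * Rmat n

def Mon1 (n : ℕ) : MatZ n := Lmat n * Rmat n

def permMat {n : ℕ} (σ : Equiv.Perm (Fin (n + 1))) : MatZ n :=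
  Matrix.of fun i j => if i = σ j then 1 else 0

/-!
Write `M₀ = N F R` and `M₁ = F M₀`. Both are nonnegative and unimodular, and the functional
`x ↦ x₀ - x₁` sends `M₀ v` to `v₀` and `M₁ v` to `-v₀`. So every column of `M₀` other than the
0-th lies on the hyperplane `x₀ = x₁`, which `F` fixes pointwise; hence `M₀` and `M₁` share those
columns. Moreover `M₀[Δ]` and `M₁[Δ]` lie on opposite sides of that hyperplane, so a common point is
the image of a vector with vanishing 0-th coordinate, on which `M₀` and `M₁` agree; the two inverse
branches therefore coincide there. The sets `M_a[Δ]` are compact and cover `Δ` (according to the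
sign of `x₀ - x₁`), so the branches glue to a continuous self-map of `Δ`.
-/

section ProjectiveAction

variable {n : ℕ}

lemma projAct_smul (A : Matrix (Fin (n + 1)) (Fin (n + 1)) ℝ) {c : ℝ} (hc : c ≠ 0)
    (v : Fin (n + 1) → ℝ) : projAct A (c • v) = projAct A v := by
  simp only [projAct, mulVec_smul, Pi.smul_apply, smul_eq_mul, ← Finset.mul_sum, mul_inv,
    smul_smul]
  field_simp

lemma continuousOn_projAct (A : Matrix (Fin (n + 1)) (Fin (n + 1)) ℝ) :
    ContinuousOn (projAct A) {x | ∑ i, (A *ᵥ x) i ≠ 0} := by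
  have hAx : Continuous (A *ᵥ ·) := continuous_const.matrix_mulVec continuous_id
  exact (continuousOn_finsetSum _ fun i _ => (continuous_apply i).comp hAx |>.continuousOn).inv₀
    (fun x hx => hx) |>.smul hAx.continuousOn

lemma nonsing_inv_mulVec_projAct {A : Matrix (Fin (n + 1)) (Fin (n + 1)) ℝ} (hA : IsUnit A.det)
    (y : Fin (n + 1) → ℝ) : A⁻¹ *ᵥ projAct A y = (∑ i, (A *ᵥ y) i)⁻¹ • y := by
  rw [projAct, mulVec_smul, mulVec_mulVec, nonsing_inv_mul _ hA, one_mulVec]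

lemma projAct_nonsing_inv_projAct {A : Matrix (Fin (n + 1)) (Fin (n + 1)) ℝ}
    (hA : IsUnit A.det) {y : Fin (n + 1) → ℝ} (hs : ∑ i, (A *ᵥ y) i ≠ 0) (hy : ∑ i, y i = 1) :
    projAct A⁻¹ (projAct A y) = y := by
  rw [projAct, nonsing_inv_mulVec_projAct hA]
  simp [← Finset.mul_sum, hy, smul_smul, hs]

lemma mem_simg_of_mulVec_eq (A : MatZ n) {x y : Fin (n + 1) → ℝ}
    (hx : x ∈ stdSimplex ℝ (Fin (n + 1))) (hy : ∀ i, 0 ≤ y i) (hAy : toR A *ᵥ y = x) :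
    x ∈ simg A := by
  have hpos : 0 < ∑ i, y i := by
    refine (Finset.sum_nonneg fun i _ => hy i).lt_of_ne fun h => ?_
    have hy0 : y = 0 := funext fun i =>
      (Finset.sum_eq_zero_iff_of_nonneg fun i _ => hy i).mp h.symm i (Finset.mem_univ i)
    simpa [← hAy, hy0] using hx.2
  refine ⟨(∑ i, y i)⁻¹ • y, ⟨fun i => ?_, ?_⟩, ?_⟩
  · exact smul_nonneg (inv_nonneg.mpr hpos.le) (hy i)
  · simp [← Finset.mul_sum, hpos.ne']
  · rw [projAct_smul _ (inv_ne_zero hpos.ne'), projAct, hAy, hx.2, inv_one, one_smul]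

lemma inSigma.mul {A B : MatZ n} (hA : inSigma A) (hB : inSigma B) : inSigma (A * B) :=
  ⟨by rw [det_mul]; exact hA.1.mul hB.1,
    fun i j => by
      rw [mul_apply]
      exact Finset.sum_nonneg fun k _ => mul_nonneg (hA.2 i k) (hB.2 k j)⟩

lemma inSigma_permMatrix (σ : Equiv.Perm (Fin (n + 1))) : inSigma (σ.permMatrix ℤ) :=
  ⟨by simp, fun i j => by simp [PEquiv.toMatrix_apply]; split_ifs <;> simp⟩

lemma toR_mul (A B : MatZ n) : toR (A * B) = toR A * toR B :=
  Matrix.map_mul (f := Int.castRingHom ℝ)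

lemma toR_permMatrix_mulVec (σ : Equiv.Perm (Fin (n + 1))) (v : Fin (n + 1) → ℝ) :
    toR (σ.permMatrix ℤ) *ᵥ v = v ∘ σ := by
  rw [← PEquiv.toMatrix_toPEquiv_mulVec]
  congr 1
  ext i j
  simp [toR, PEquiv.toMatrix_apply]

variable {A B : MatZ n}

lemma inSigma.isUnit_det_toR (hA : inSigma A) : IsUnit (toR A).det := by
  rw [toR, ← Int.cast_det]
  exact hA.1.map (Int.castRingHom ℝ)

lemma inSigma.sum_mulVec_pos (hA : inSigma A) {y : Fin (n + 1) → ℝ}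
    (hy : y ∈ stdSimplex ℝ (Fin (n + 1))) : 0 < ∑ i, (toR A *ᵥ y) i := by
  have hAy : ∀ i, 0 ≤ (toR A *ᵥ y) i := fun i =>
    dotProduct_nonneg_of_nonneg (fun j => Int.cast_nonneg (hA.2 i j)) hy.1
  refine (Finset.sum_nonneg fun i _ => hAy i).lt_of_ne fun h => ?_
  have hAy0 : toR A *ᵥ y = 0 := funext fun i =>
    (Finset.sum_eq_zero_iff_of_nonneg fun i _ => hAy i).mp h.symm i (Finset.mem_univ i)
  have hy0 : y = 0 := by
    rw [← one_mulVec y, ← nonsing_inv_mul _ hA.isUnit_det_toR, ← mulVec_mulVec, hAy0,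
      mulVec_zero]
  simpa [hy0] using hy.2

lemma inSigma.projAct_inv_projAct (hA : inSigma A) {y : Fin (n + 1) → ℝ}
    (hy : y ∈ stdSimplex ℝ (Fin (n + 1))) : projAct (toR A)⁻¹ (projAct (toR A) y) = y :=
  projAct_nonsing_inv_projAct hA.isUnit_det_toR (hA.sum_mulVec_pos hy).ne' hy.2

lemma inSigma.isClosed_simg (hA : inSigma A) : IsClosed (simg A) :=
  ((isCompact_stdSimplex ℝ _).image_of_continuousOn
    ((continuousOn_projAct _).mono fun _ hy => (hA.sum_mulVec_pos hy).ne')).isClosed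

lemma inSigma.continuousOn_projAct_inv (hA : inSigma A) :
    ContinuousOn (projAct (toR A)⁻¹) (simg A) := by
  refine (continuousOn_projAct _).mono ?_
  rintro _ ⟨y, hy, rfl⟩
  simp [nonsing_inv_mulVec_projAct hA.isUnit_det_toR, ← Finset.mul_sum, hy.2,
    (hA.sum_mulVec_pos hy).ne']

end ProjectiveAction

section TwoBranches

variable {n : ℕ} {A B : MatZ n}

lemma toR_mulVec_eq_of_col_eq (hcol : ∀ i : Fin (n + 1), i ≠ 0 → (fun j => A j i) = fun j => B j i)
    {z : Fin (n + 1) → ℝ} (hz : z 0 = 0) : toR A *ᵥ z = toR B *ᵥ z := by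
  funext k
  simp only [mulVec, dotProduct]
  refine Finset.sum_congr rfl fun i _ => ?_
  by_cases hi : i = 0
  · simp [hi, hz]
  · simp [toR, congrFun (hcol i hi) k]

lemma eq_zero_of_projAct_eq (hA : inSigma A) (hB : inSigma B)
    (w : Fin (n + 1) → ℝ) (hwA : ∀ v, w ⬝ᵥ (toR A *ᵥ v) = v 0)
    (hwB : ∀ v, w ⬝ᵥ (toR B *ᵥ v) = -v 0) {y z : Fin (n + 1) → ℝ}
    (hy : y ∈ stdSimplex ℝ (Fin (n + 1))) (hz : z ∈ stdSimplex ℝ (Fin (n + 1)))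
    (h : projAct (toR A) y = projAct (toR B) z) : z 0 = 0 := by
  have hw := congrArg (w ⬝ᵥ ·) h
  simp only [projAct, dotProduct_smul, hwA, hwB, smul_eq_mul] at hw
  have hyA := inv_pos.mpr (hA.sum_mulVec_pos hy)
  have hzB := inv_pos.mpr (hB.sum_mulVec_pos hz)
  have hzero : (∑ i, (toR B *ᵥ z) i)⁻¹ * z 0 = 0 := by
    linarith [mul_nonneg hyA.le (hy.1 0), mul_nonneg hzB.le (hz.1 0)]
  exact (mul_eq_zero.mp hzero).resolve_left hzB.ne'

lemma projAct_inv_eq_of_mem_inter (hA : inSigma A) (hB : inSigma B)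
    (hcol : ∀ i : Fin (n + 1), i ≠ 0 → (fun j => A j i) = fun j => B j i)
    (w : Fin (n + 1) → ℝ) (hwA : ∀ v, w ⬝ᵥ (toR A *ᵥ v) = v 0)
    (hwB : ∀ v, w ⬝ᵥ (toR B *ᵥ v) = -v 0) {x : Fin (n + 1) → ℝ} (hx : x ∈ simg A ∩ simg B) :
    projAct (toR A)⁻¹ x = projAct (toR B)⁻¹ x := by
  obtain ⟨⟨y, hy, rfl⟩, ⟨z, hz, hyz⟩⟩ := hx
  have hz0 := eq_zero_of_projAct_eq hA hB w hwA hwB hy hz hyz.symm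
  have hzA : projAct (toR A) y = projAct (toR A) z := by
    rw [← hyz, projAct, projAct, toR_mulVec_eq_of_col_eq hcol hz0]
  rw [hzA, hA.projAct_inv_projAct hz, ← hzA, ← hyz, hB.projAct_inv_projAct hz]

lemma exists_continuousOn_mapsTo_of_projAct_inv_eq (hA : inSigma A) (hB : inSigma B)
    (hcover : stdSimplex ℝ (Fin (n + 1)) ⊆ simg A ∪ simg B)
    (hAB : ∀ x ∈ simg A ∩ simg B, projAct (toR A)⁻¹ x = projAct (toR B)⁻¹ x) :
    ∃ G : (Fin (n + 1) → ℝ) → (Fin (n + 1) → ℝ),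
      ContinuousOn G (stdSimplex ℝ (Fin (n + 1))) ∧
      Set.MapsTo G (stdSimplex ℝ (Fin (n + 1))) (stdSimplex ℝ (Fin (n + 1))) ∧
      (∀ x ∈ simg A, G x = projAct (toR A)⁻¹ x) ∧
      (∀ x ∈ simg B, G x = projAct (toR B)⁻¹ x) := by
  classical
  set G := (simg A).piecewise (projAct (toR A)⁻¹) (projAct (toR B)⁻¹)
  have hGA : ∀ x ∈ simg A, G x = projAct (toR A)⁻¹ x := fun x hx => Set.piecewise_eq_of_mem _ _ _ hx
  have hGB : ∀ x ∈ simg B, G x = projAct (toR B)⁻¹ x := fun x hx => by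
    by_cases hxA : x ∈ simg A
    · rw [hGA x hxA, hAB x ⟨hxA, hx⟩]
    · exact Set.piecewise_eq_of_notMem _ _ _ hxA
  refine ⟨G, ?_, ?_, hGA, hGB⟩
  · refine ContinuousOn.mono ?_ hcover
    exact (hA.continuousOn_projAct_inv.congr hGA).union_of_isClosed
      (hB.continuousOn_projAct_inv.congr hGB) hA.isClosed_simg hB.isClosed_simg
  · intro x hx
    rcases hcover hx with ⟨y, hy, rfl⟩ | ⟨y, hy, rfl⟩
    · rwa [hGA _ ⟨y, hy, rfl⟩, hA.projAct_inv_projAct hy]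
    · rwa [hGB _ ⟨y, hy, rfl⟩, hB.projAct_inv_projAct hy]

end TwoBranches

section Monkemeyer

variable {n : ℕ}

lemma Fin.zero_ne_one_of_one_le (hn : 1 ≤ n) : (0 : Fin (n + 1)) ≠ 1 := by
  simp [Fin.ext_iff]; omega

lemma Fmat_eq_permMatrix : Fmat n = (Equiv.swap 0 1).permMatrix ℤ := by
  ext i j
  simp only [Fmat, of_apply, PEquiv.toMatrix_apply, Equiv.toPEquiv_apply, Option.mem_some_iff,
    Equiv.swap_apply_eq_iff]

lemma Rmat_eq_permMatrix : Rmat n = Equiv.Perm.permMatrix ℤ (Equiv.subRight 1) := by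
  ext i j
  simp only [Rmat, of_apply, PEquiv.toMatrix_apply, Equiv.toPEquiv_apply, Option.mem_some_iff,
    Equiv.subRight_apply, sub_eq_iff_eq_add]

lemma Mon1_eq_Fmat_mul_Mon0 : Mon1 n = Fmat n * Mon0 n := by
  simp only [Mon1, Lmat, Mon0, Matrix.mul_assoc]

lemma inSigma_Nmat : inSigma (Nmat n) := by
  refine ⟨?_, fun i j => by simp only [Nmat, of_apply]; split_ifs <;> simp⟩
  rw [det_of_isUpperTriangular]
  · simp [Nmat]
  · intro i j (hji : j < i)
    simp [Nmat, hji.ne', ((Fin.zero_le j).trans_lt hji).ne']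

lemma inSigma_Mon0 : inSigma (Mon0 n) := by
  rw [Mon0, Fmat_eq_permMatrix, Rmat_eq_permMatrix]
  exact (inSigma_Nmat.mul (inSigma_permMatrix _)).mul (inSigma_permMatrix _)

lemma inSigma_Mon1 : inSigma (Mon1 n) := by
  rw [Mon1_eq_Fmat_mul_Mon0, Fmat_eq_permMatrix]
  exact (inSigma_permMatrix _).mul inSigma_Mon0

lemma toR_Nmat_mulVec (hn : 1 ≤ n) (v : Fin (n + 1) → ℝ) :
    toR (Nmat n) *ᵥ v = v + Pi.single 0 (v 1) := by
  have h01 := Fin.zero_ne_one_of_one_le hn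
  funext k
  by_cases hk : k = 0
  · subst hk
    simp only [toR, Nmat, mulVec, dotProduct, map_apply, of_apply, Pi.add_apply,
      Pi.single_eq_same]
    rw [Fintype.sum_eq_add 0 1 h01 fun m hm => by simp [hm.2, Ne.symm hm.1]]
    simp [h01]
  · simp [toR, Nmat, mulVec, dotProduct, hk]

lemma toR_Mon0_mulVec (v : Fin (n + 1) → ℝ) :
    toR (Mon0 n) *ᵥ v = toR (Nmat n) *ᵥ (v ∘ Equiv.subRight 1 ∘ Equiv.swap 0 1) := by
  rw [Mon0, toR_mul, toR_mul, ← mulVec_mulVec, ← mulVec_mulVec, Fmat_eq_permMatrix,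
    Rmat_eq_permMatrix, toR_permMatrix_mulVec, toR_permMatrix_mulVec]
  rfl

lemma toR_Mon1_mulVec (v : Fin (n + 1) → ℝ) :
    toR (Mon1 n) *ᵥ v = (toR (Mon0 n) *ᵥ v) ∘ Equiv.swap 0 1 := by
  rw [Mon1_eq_Fmat_mul_Mon0, toR_mul, ← mulVec_mulVec, Fmat_eq_permMatrix, toR_permMatrix_mulVec]

lemma Mon0_mulVec_zero_sub_one (hn : 1 ≤ n) (v : Fin (n + 1) → ℝ) :
    (toR (Mon0 n) *ᵥ v) 0 - (toR (Mon0 n) *ᵥ v) 1 = v 0 := by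
  have h01 := Fin.zero_ne_one_of_one_le hn
  simp [toR_Mon0_mulVec, toR_Nmat_mulVec hn, Ne.symm h01]

lemma Mon1_mulVec_zero_sub_one (hn : 1 ≤ n) (v : Fin (n + 1) → ℝ) :
    (toR (Mon1 n) *ᵥ v) 0 - (toR (Mon1 n) *ᵥ v) 1 = -v 0 := by
  simp only [toR_Mon1_mulVec, Function.comp_apply, Equiv.swap_apply_left, Equiv.swap_apply_right]
  linarith [Mon0_mulVec_zero_sub_one hn v]

lemma Mon0_col_eq_Mon1_col (hn : 1 ≤ n) {i : Fin (n + 1)} (hi : i ≠ 0) :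
    (fun j => Mon0 n j i) = fun j => Mon1 n j i := by
  have hrows : Mon0 n 0 i = Mon0 n 1 i := by
    have h := Mon0_mulVec_zero_sub_one hn (Pi.single i 1)
    simp only [mulVec_single_one, col_apply, toR, map_apply, Pi.single_eq_of_ne' hi,
      sub_eq_zero] at h
    exact_mod_cast h
  funext j
  rw [Mon1_eq_Fmat_mul_Mon0, Fmat_eq_permMatrix, PEquiv.toMatrix_toPEquiv_mul, submatrix_apply,
    id, Equiv.swap_apply_def]
  split_ifs with h0 h1
  · rw [h0, hrows]
  · rw [h1, hrows]
  · rfl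

lemma exists_nonneg_Mon0_mulVec_eq (hn : 1 ≤ n) {x : Fin (n + 1) → ℝ} (hx : ∀ i, 0 ≤ x i)
    (h10 : x 1 ≤ x 0) : ∃ y, (∀ i, 0 ≤ y i) ∧ toR (Mon0 n) *ᵥ y = x := by
  have h01 := Fin.zero_ne_one_of_one_le hn
  set w := x - Pi.single 0 (x 1)
  have hw : ∀ m, 0 ≤ w m := fun m => by
    by_cases hm : m = 0
    · simp [w, hm, h10]
    · simp [w, hm, hx m]
  -- `y = R⁻¹ F N⁻¹ x`
  refine ⟨fun j => w (Equiv.swap 0 1 (j + 1)), fun j => hw _, ?_⟩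
  rw [toR_Mon0_mulVec, toR_Nmat_mulVec hn]
  ext k
  simp [w, Ne.symm h01]

lemma stdSimplex_subset_simg_Mon0_union_simg_Mon1 (hn : 1 ≤ n) :
    stdSimplex ℝ (Fin (n + 1)) ⊆ simg (Mon0 n) ∪ simg (Mon1 n) := by
  intro x hx
  rcases le_total (x 1) (x 0) with h | h
  · obtain ⟨y, hy, hxy⟩ := exists_nonneg_Mon0_mulVec_eq hn hx.1 h
    exact Or.inl (mem_simg_of_mulVec_eq _ hx hy hxy)
  · obtain ⟨y, hy, hxy⟩ :=
      exists_nonneg_Mon0_mulVec_eq hn (x := x ∘ Equiv.swap 0 1) (fun i => hx.1 _) (by simpa)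
    refine Or.inr (mem_simg_of_mulVec_eq _ hx hy ?_)
    ext k
    simp [toR_Mon1_mulVec, hxy]

end Monkemeyer

theorem stmt6 (n : ℕ) (hn : 1 ≤ n) :
    (∀ i : Fin (n + 1), i ≠ 0 → (fun j => Mon0 n j i) = (fun j => Mon1 n j i)) ∧
    (∀ x ∈ simg (Mon0 n) ∩ simg (Mon1 n),
      projAct (toR (Mon0 n))⁻¹ x = projAct (toR (Mon1 n))⁻¹ x) ∧
    ∃ G : (Fin (n + 1) → ℝ) → (Fin (n + 1) → ℝ),
      ContinuousOn G (stdSimplex ℝ (Fin (n + 1))) ∧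
      Set.MapsTo G (stdSimplex ℝ (Fin (n + 1))) (stdSimplex ℝ (Fin (n + 1))) ∧
      (∀ x ∈ simg (Mon0 n), G x = projAct (toR (Mon0 n))⁻¹ x) ∧
      (∀ x ∈ simg (Mon1 n), G x = projAct (toR (Mon1 n))⁻¹ x) := by
  have hcol : ∀ i : Fin (n + 1), i ≠ 0 → (fun j => Mon0 n j i) = fun j => Mon1 n j i :=
    fun i hi => Mon0_col_eq_Mon1_col hn hi
  have hinter : ∀ x ∈ simg (Mon0 n) ∩ simg (Mon1 n),
      projAct (toR (Mon0 n))⁻¹ x = projAct (toR (Mon1 n))⁻¹ x := fun x hx =>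
    projAct_inv_eq_of_mem_inter inSigma_Mon0 inSigma_Mon1 hcol (Pi.single 0 1 - Pi.single 1 1)
      (by simpa [sub_dotProduct] using Mon0_mulVec_zero_sub_one hn)
      (by simpa [sub_dotProduct] using Mon1_mulVec_zero_sub_one hn) hx
  exact ⟨hcol, hinter, exists_continuousOn_mapsTo_of_projAct_inv_eq inSigma_Mon0 inSigma_Mon1
    (stdSimplex_subset_simg_Mon0_union_simg_Mon1 hn) hinter⟩
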